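/- Let R, S and T be unital rings, let M be an R–T-bimodule, and let (R, S; N, L; ζ, θ) be a Morita context with ζ and θ surjective (so R and S are Morita equivalent). Let Λ be the upper-triangular matrix ring with underlying additive group R × M × T and multiplication (r, m, t)·(r′, m′, t′) = (r·r′, r·m′ + m·t′, t·t′), and let Λ′ be the upper-triangular matrix ring with underlying additive group S × (L ⊗_R M) × T and multiplication (s, x, t)·(s′, x′, t′) = (s·s′, s·x′ + x·t′, t·t′), where L ⊗_R M carries the S–T-bimodule structure s·(l ⊗ m)·t = (s·l) ⊗ (m·t). Then Λ and Λ′ are Morita equivalent, i.e., their categories of left modules are equivalent. -/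

import Mathlib

universe u

open MulOpposite

/-- A biadditive map `M × X → Z` which is balanced over the ring `A`,
where `ra` is a right `A`-action on `M` and `la` is a left `A`-action on `X`. -/
def IsBalancedMap (A : Type u) [Ring A] {M X Z : Type u}
    [AddCommGroup M] [AddCommGroup X] [AddCommGroup Z]
    (ra : M → A → M) (la : A → X → X) (g : M → X → Z) : Prop :=
  (∀ m m' x, g (m + m') x = g m x + g m' x) ∧
  (∀ m x x', g m (x + x') = g m x + g m x') ∧
  (∀ (a : A) m x, g (ra m a) x = g m (la a x))

/-- `τ : M × X → T` exhibits `T` as the tensor product `M ⊗[A] X` of a right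
`A`-module `M` and a left `A`-module `X`: `τ` is biadditive and `A`-balanced and
every biadditive `A`-balanced map out of `M × X` factors uniquely through `τ`. -/
structure IsBTensor (A : Type u) [Ring A] {M X : Type u}
    [AddCommGroup M] [AddCommGroup X]
    (ra : M → A → M) (la : A → X → X)
    (T : Type u) [AddCommGroup T] (τ : M → X → T) : Prop where
  balanced : IsBalancedMap A ra la τ
  lift : ∀ (Z : Type u) [AddCommGroup Z] (g : M → X → Z),
    IsBalancedMap A ra la g → ∃! h : T →+ Z, ∀ m x, h (τ m x) = g m x

/-- Surjectivity of the additive map `M ⊗ X → Z` induced by `g : M × X → Z`. -/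
def TensorSurj {M X Z : Type u} [AddCommGroup Z] (g : M → X → Z) : Prop :=
  AddSubgroup.closure {z : Z | ∃ m x, z = g m x} = ⊤

/-- A (classical) Morita context `(R, S; N, L; ζ, θ)`: `N` is an `R`–`S`-bimodule,
`L` is an `S`–`R`-bimodule, and `zeta : N ⊗[S] L → R`, `theta : L ⊗[R] N → S` are
bimodule homomorphisms (recorded here as balanced biadditive bilinear maps)
satisfying the mixed associativity conditions. -/
structure MoritaCtx (R S N L : Type u) [Ring R] [Ring S]
    [AddCommGroup N] [AddCommGroup L]
    [Module R N] [Module Sᵐᵒᵖ N] [SMulCommClass R Sᵐᵒᵖ N]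
    [Module S L] [Module Rᵐᵒᵖ L] [SMulCommClass S Rᵐᵒᵖ L] where
  zeta : N → L → R
  theta : L → N → S
  zeta_add_left : ∀ n n' l, zeta (n + n') l = zeta n l + zeta n' l
  zeta_add_right : ∀ n l l', zeta n (l + l') = zeta n l + zeta n l'
  zeta_balanced : ∀ (s : S) n l, zeta (op s • n) l = zeta n (s • l)
  zeta_left : ∀ (r : R) n l, zeta (r • n) l = r * zeta n l
  zeta_right : ∀ (r : R) n l, zeta n (op r • l) = zeta n l * r
  theta_add_left : ∀ l l' n, theta (l + l') n = theta l n + theta l' n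
  theta_add_right : ∀ l n n', theta l (n + n') = theta l n + theta l n'
  theta_balanced : ∀ (r : R) l n, theta (op r • l) n = theta l (r • n)
  theta_left : ∀ (s : S) l n, theta (s • l) n = s * theta l n
  theta_right : ∀ (s : S) l n, theta l (op s • n) = theta l n * s
  assoc_left : ∀ n l n', zeta n l • n' = op (theta l n') • n
  assoc_right : ∀ l n l', theta l n • l' = op (zeta n l') • l

/-- A generalised Morita context `(A_i; M_ij; φ_ikj)` of size `n`:
rings `A i`, `A_i`–`A_j`-bimodules `M i j` with `M i i` identified with the
regular bimodule `A i` via the additive isomorphisms `δ i`, and bimodule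
homomorphisms `φ i k j : M i k ⊗[A k] M k j → M i j` (recorded as balanced
biadditive bilinear maps) which restrict to the action/multiplication maps on
diagonal indices and satisfy the mixed associativity conditions. -/
structure GenMoritaCtx (n : ℕ) (A : Fin n → Type u) (M : Fin n → Fin n → Type u)
    [∀ i, Ring (A i)] [∀ i j, AddCommGroup (M i j)]
    [∀ i j, Module (A i) (M i j)] [∀ i j, Module ((A j)ᵐᵒᵖ) (M i j)]
    [∀ i j, SMulCommClass (A i) ((A j)ᵐᵒᵖ) (M i j)] where
  φ : ∀ i k j, M i k → M k j → M i j
  δ : ∀ i, A i ≃+ M i i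
  φ_add_left : ∀ i k j (x x' : M i k) (y : M k j), φ i k j (x + x') y = φ i k j x y + φ i k j x' y
  φ_add_right : ∀ i k j (x : M i k) (y y' : M k j), φ i k j x (y + y') = φ i k j x y + φ i k j x y'
  φ_balanced : ∀ i k j (a : A k) (x : M i k) (y : M k j), φ i k j (op a • x) y = φ i k j x (a • y)
  φ_smul_left : ∀ i k j (a : A i) (x : M i k) (y : M k j), φ i k j (a • x) y = a • φ i k j x y
  φ_smul_right : ∀ i k j (a : A j) (x : M i k) (y : M k j), φ i k j x (op a • y) = op a • φ i k j x y
  δ_mul_left : ∀ i (a b : A i), δ i (a * b) = a • δ i b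
  δ_mul_right : ∀ i (a b : A i), δ i (a * b) = op b • δ i a
  φ_diag_left : ∀ k j (a : A k) (y : M k j), φ k k j (δ k a) y = a • y
  φ_diag_right : ∀ i k (a : A k) (x : M i k), φ i k k x (δ k a) = op a • x
  φ_assoc : ∀ i h k j (x : M i h) (y : M h k) (z : M k j),
    φ i h j x (φ h k j y z) = φ i k j (φ i h k x y) z

variable {n : ℕ} {A : Fin n → Type u} {M : Fin n → Fin n → Type u}
    [∀ i, Ring (A i)] [∀ i j, AddCommGroup (M i j)]
    [∀ i j, Module (A i) (M i j)] [∀ i j, Module ((A j)ᵐᵒᵖ) (M i j)]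
    [∀ i j, SMulCommClass (A i) ((A j)ᵐᵒᵖ) (M i j)]

/-- The matrix multiplication `(x·y)_{ij} = ∑ k, φ_ikj (x_ik ⊗ y_kj)` on `⊕_{i,j} M i j`. -/
def matMul (ctx : GenMoritaCtx n A M) (x y : ∀ i j, M i j) : ∀ i j, M i j :=
  fun i j => ∑ k, ctx.φ i k j (x i k) (y k j)

/-- The identity matrix: `1_{A_i}` on the diagonal and `0` elsewhere. -/
def matOne (ctx : GenMoritaCtx n A M) : ∀ i j, M i j :=
  fun i j => if h : i = j then cast (congrArg (M i) h) (ctx.δ i 1) else 0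

/-- `ε : Λ ≃ ⊕_{i,j} M i j` exhibits the ring `Λ` as the generalised matrix ring
`[A_i; M_ij]` of the generalised Morita context `ctx`. -/
structure IsMatrixRing (ctx : GenMoritaCtx n A M) (Λ : Type u) [Ring Λ]
    (ε : Λ → ∀ i j, M i j) : Prop where
  bijective : Function.Bijective ε
  map_add : ∀ x y, ε (x + y) = ε x + ε y
  map_mul : ∀ x y, ε (x * y) = matMul ctx (ε x) (ε y)
  map_one : ε 1 = matOne ctx

/-- The scalar multiplication of an explicitly given module structure. -/
def msmul {Λ X : Type u} [Ring Λ] [AddCommGroup X] (inst : Module Λ X) (c : Λ) (x : X) : X :=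
  letI := inst; c • x



open MulOpposite CategoryTheory

section Abstract

variable {A B P Q : Type u} [Ring A] [Ring B]
  [AddCommGroup P] [Module A P] [Module Bᵐᵒᵖ P] [SMulCommClass A Bᵐᵒᵖ P]

/-- Right multiplication by `op b` as an `A`-linear endomorphism of `P`. -/
def rOpSmul (b : B) : P →ₗ[A] P where
  toFun p := op b • p
  map_add' := smul_add _
  map_smul' a p := (smul_comm a (op b) p).symm

/-- The left `B`-module structure on `P →ₗ[A] X` induced by the right
`B`-action on `P`. -/
def homModule (X : Type u) [AddCommGroup X] [Module A X] :
    Module B (P →ₗ[A] X) where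
  smul b f := f.comp (rOpSmul b)
  one_smul f := LinearMap.ext fun p => by
    show f (op (1 : B) • p) = f p
    rw [op_one, one_smul]
  mul_smul b b' f := LinearMap.ext fun p => by
    show f (op (b * b') • p) = f (op b' • op b • p)
    rw [op_mul, mul_smul]
  smul_zero b := rfl
  smul_add b f g := rfl
  add_smul b b' f := LinearMap.ext fun p => by
    show f (op (b + b') • p) = f (op b • p) + f (op b' • p)
    rw [MulOpposite.op_add, add_smul, f.map_add]
  zero_smul f := LinearMap.ext fun p => by
    show f (op (0 : B) • p) = 0
    rw [op_zero, zero_smul, f.map_zero]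

attribute [local instance] homModule

set_option linter.unusedSectionVars false

@[simp] lemma homModule_smul_apply {X : Type u} [AddCommGroup X] [Module A X]
    (b : B) (f : P →ₗ[A] X) (p : P) : (b • f) p = f (op b • p) := rfl

/-- The hom functor `X ↦ Hom_A(P, X)` from `A`-modules to `B`-modules. -/
def homFunctor : ModuleCat.{u} A ⥤ ModuleCat.{u} B where
  obj X := ModuleCat.of B (P →ₗ[A] X)
  map {X Y} f := ModuleCat.ofHom
    { toFun := fun g => f.hom.comp g
      map_add' := fun g g' => LinearMap.comp_add g g' f.hom
      map_smul' := fun b g => rfl }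
  map_id X := ModuleCat.hom_ext (LinearMap.ext fun g => LinearMap.ext fun p => rfl)
  map_comp f g := ModuleCat.hom_ext (LinearMap.ext fun h => LinearMap.ext fun p => rfl)

@[simp] lemma homFunctor_map_apply {X Y : ModuleCat.{u} A} (f : X ⟶ Y)
    (g : P →ₗ[A] X) : ((homFunctor (B := B) (P := P)).map f).hom g = f.hom.comp g := rfl

end Abstract

section Abstract2

variable {A B P Q : Type u} [Ring A] [Ring B]
  [AddCommGroup P] [Module A P] [Module Bᵐᵒᵖ P] [SMulCommClass A Bᵐᵒᵖ P]
  [AddCommGroup Q] [Module B Q] [Module Aᵐᵒᵖ Q] [SMulCommClass B Aᵐᵒᵖ Q]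

attribute [local instance] homModule

variable (α : P → Q → A) (β : Q → P → B)

/-- The unit map `X → Hom_B(Q, Hom_A(P, X))`, `x ↦ (q ↦ (p ↦ α p q • x))`. -/
def unitMap (αa₁ : ∀ p p' q, α (p + p') q = α p q + α p' q)
    (αa₂ : ∀ p q q', α p (q + q') = α p q + α p q')
    (αl : ∀ (a : A) p q, α (a • p) q = a * α p q)
    (αr : ∀ (a : A) p q, α p (op a • q) = α p q * a)
    (αbal : ∀ (b : B) p q, α (op b • p) q = α p (b • q))
    (X : Type u) [AddCommGroup X] [Module A X] :
    X →ₗ[A] (Q →ₗ[B] (P →ₗ[A] X)) where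
  toFun x :=
    { toFun := fun q =>
        { toFun := fun p => α p q • x
          map_add' := fun p p' => by
            show α (p + p') q • x = α p q • x + α p' q • x
            rw [αa₁, add_smul]
          map_smul' := fun a p => by
            show α (a • p) q • x = a • (α p q • x)
            rw [αl, mul_smul] }
      map_add' := fun q q' => LinearMap.ext fun p => by
        show α p (q + q') • x = α p q • x + α p q' • x
        rw [αa₂, add_smul]
      map_smul' := fun b q => LinearMap.ext fun p => by
        show α p (b • q) • x = α (op b • p) q • x
        rw [αbal] }
  map_add' x x' := LinearMap.ext fun q => LinearMap.ext fun p => by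
    show α p q • (x + x') = α p q • x + α p q • x'
    rw [smul_add]
  map_smul' a x := LinearMap.ext fun q => LinearMap.ext fun p => by
    show α p q • (a • x) = α p (op a • q) • x
    rw [αr, mul_smul]

lemma unitMap_bijective (αa₁ : ∀ p p' q, α (p + p') q = α p q + α p' q)
    (αa₂ : ∀ p q q', α p (q + q') = α p q + α p q')
    (αl : ∀ (a : A) p q, α (a • p) q = a * α p q)
    (αr : ∀ (a : A) p q, α p (op a • q) = α p q * a)
    (αbal : ∀ (b : B) p q, α (op b • p) q = α p (b • q))
    (assoc₁ : ∀ p q p', α p q • p' = op (β q p') • p)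
    (assoc₂ : ∀ q p q', β q p • q' = op (α p q') • q)
    (hα : AddSubgroup.closure {a : A | ∃ p q, a = α p q} = ⊤)
    (X : Type u) [AddCommGroup X] [Module A X] :
    Function.Bijective (unitMap α αa₁ αa₂ αl αr αbal X) := by
  constructor
  · intro x y hxy
    have h : ∀ q p, α p q • x = α p q • y := fun q p =>
      LinearMap.congr_fun (LinearMap.congr_fun hxy q) p
    have key : ∀ a : A, a • x = a • y := by
      intro a
      have ha : a ∈ AddSubgroup.closure {a : A | ∃ p q, a = α p q} :=
        hα ▸ AddSubgroup.mem_top a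
      refine AddSubgroup.closure_induction ?_ ?_ ?_ ?_ ha
      · rintro _ ⟨p, q, rfl⟩; exact h q p
      · simp
      · intro a a' _ _ h1 h2; rw [add_smul, add_smul, h1, h2]
      · intro a _ h1; rw [neg_smul, neg_smul, h1]
    simpa using key 1
  · intro f
    have key : ∀ a : A, ∃ x : X, ∀ q p, f (op a • q) p = α p q • x := by
      intro a
      have ha : a ∈ AddSubgroup.closure {a : A | ∃ p q, a = α p q} :=
        hα ▸ AddSubgroup.mem_top a
      refine AddSubgroup.closure_induction ?_ ?_ ?_ ?_ ha
      · rintro _ ⟨p₀, q₀, rfl⟩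
        refine ⟨f q₀ p₀, fun q p => ?_⟩
        calc f (op (α p₀ q₀) • q) p = f (β q p₀ • q₀) p := by rw [assoc₂]
          _ = (β q p₀ • (f q₀)) p := by rw [f.map_smul]
          _ = f q₀ (op (β q p₀) • p) := rfl
          _ = f q₀ (α p q • p₀) := by rw [assoc₁]
          _ = α p q • f q₀ p₀ := (f q₀).map_smul _ _
      · exact ⟨0, fun q p => by simp⟩
      · rintro a a' _ _ ⟨x, hx⟩ ⟨x', hx'⟩
        refine ⟨x + x', fun q p => ?_⟩
        rw [MulOpposite.op_add, add_smul, f.map_add, LinearMap.add_apply, hx, hx', smul_add]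
      · rintro a _ ⟨x, hx⟩
        refine ⟨-x, fun q p => ?_⟩
        rw [MulOpposite.op_neg, neg_smul, f.map_neg, LinearMap.neg_apply, hx, smul_neg]
    obtain ⟨x, hx⟩ := key 1
    refine ⟨x, ?_⟩
    ext q p
    exact (by simpa using (hx q p).symm : α p q • x = f q p)

end Abstract2

section Abstract3

variable {A B P Q : Type u} [Ring A] [Ring B]
  [AddCommGroup P] [Module A P] [Module Bᵐᵒᵖ P] [SMulCommClass A Bᵐᵒᵖ P]
  [AddCommGroup Q] [Module B Q] [Module Aᵐᵒᵖ Q] [SMulCommClass B Aᵐᵒᵖ Q]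

attribute [local instance] homModule

theorem morita_abstract (α : P → Q → A) (β : Q → P → B)
    (αa₁ : ∀ p p' q, α (p + p') q = α p q + α p' q)
    (αa₂ : ∀ p q q', α p (q + q') = α p q + α p q')
    (αl : ∀ (a : A) p q, α (a • p) q = a * α p q)
    (αr : ∀ (a : A) p q, α p (op a • q) = α p q * a)
    (αbal : ∀ (b : B) p q, α (op b • p) q = α p (b • q))
    (βa₁ : ∀ q q' p, β (q + q') p = β q p + β q' p)
    (βa₂ : ∀ q p p', β q (p + p') = β q p + β q p')
    (βl : ∀ (b : B) q p, β (b • q) p = b * β q p)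
    (βr : ∀ (b : B) q p, β q (op b • p) = β q p * b)
    (βbal : ∀ (a : A) q p, β (op a • q) p = β q (a • p))
    (assoc₁ : ∀ p q p', α p q • p' = op (β q p') • p)
    (assoc₂ : ∀ q p q', β q p • q' = op (α p q') • q)
    (hα : AddSubgroup.closure {a : A | ∃ p q, a = α p q} = ⊤)
    (hβ : AddSubgroup.closure {b : B | ∃ q p, b = β q p} = ⊤) :
    Nonempty (ModuleCat.{u} A ≌ ModuleCat.{u} B) := by
  constructor
  refine CategoryTheory.Equivalence.mk
    (homFunctor (A := A) (B := B) (P := P))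
    (homFunctor (A := B) (B := A) (P := Q)) ?_ ?_
  · -- unit : 𝟭 (ModuleCat A) ≅ F ⋙ G
    refine NatIso.ofComponents
      (fun X => (LinearEquiv.ofBijective (unitMap α αa₁ αa₂ αl αr αbal X)
        (unitMap_bijective α β αa₁ αa₂ αl αr αbal assoc₁ assoc₂ hα X)).toModuleIso) ?_
    intro X Y f
    refine ModuleCat.hom_ext (LinearMap.ext fun x => LinearMap.ext fun q => LinearMap.ext fun p => ?_)
    show α p q • (f.hom x) = f.hom (α p q • x)
    rw [f.hom.map_smul]
  · -- counit : G ⋙ F ≅ 𝟭 (ModuleCat B)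
    refine Iso.symm ?_
    refine NatIso.ofComponents
      (fun Y => (LinearEquiv.ofBijective
        (unitMap (A := B) (B := A) (P := Q) (Q := P)
          (fun q p => β q p) βa₁ βa₂ βl βr βbal Y)
        (unitMap_bijective (A := B) (B := A) (P := Q) (Q := P)
          (fun q p => β q p) (fun p q => α p q) βa₁ βa₂ βl βr βbal assoc₂ assoc₁ hβ Y)).toModuleIso) ?_
    intro X Y f
    refine ModuleCat.hom_ext (LinearMap.ext fun y => LinearMap.ext fun p => LinearMap.ext fun q => ?_)
    show β q p • (f.hom y) = f.hom (β q p • y)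
    rw [f.hom.map_smul]

end Abstract3

section Tensor

variable {R L M TT : Type u} [Ring R] [AddCommGroup L] [AddCommGroup M] [AddCommGroup TT]
  [Module R M] [Module Rᵐᵒᵖ L] {τ : L → M → TT}
  (hTT : IsBTensor R (fun (l : L) r => op r • l) (fun r (m : M) => r • m) TT τ)

include hTT

lemma tau_add_left (l l' : L) (m : M) : τ (l + l') m = τ l m + τ l' m :=
  hTT.balanced.1 l l' m

lemma tau_add_right (l : L) (m m' : M) : τ l (m + m') = τ l m + τ l m' :=
  hTT.balanced.2.1 l m m'

lemma tau_bal (r : R) (l : L) (m : M) : τ (op r • l) m = τ l (r • m) :=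
  hTT.balanced.2.2 r l m

lemma tau_zero_left (m : M) : τ 0 m = 0 := by
  have := tau_add_left hTT 0 0 m; simpa using this.symm

lemma tau_zero_right (l : L) : τ l 0 = 0 := by
  have := tau_add_right hTT l 0 0; simpa using this.symm

lemma tensor_ext {Z : Type u} [AddCommGroup Z] (h₁ h₂ : TT →+ Z)
    (h : ∀ l m, h₁ (τ l m) = h₂ (τ l m)) : h₁ = h₂ := by
  have hg : IsBalancedMap R (fun (l : L) r => op r • l) (fun r (m : M) => r • m)
      (fun l m => h₁ (τ l m)) := by
    refine ⟨fun l l' m => ?_, fun l m m' => ?_, fun r l m => ?_⟩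
    · dsimp only; rw [tau_add_left hTT, map_add]
    · dsimp only; rw [tau_add_right hTT, map_add]
    · dsimp only; rw [tau_bal hTT]
  exact (hTT.lift Z _ hg).unique (fun l m => rfl) (fun l m => (h l m).symm)

lemma fun_ext_tau {Z : Type u} [AddCommGroup Z] {f g : TT → Z}
    (hf : ∀ x y, f (x + y) = f x + f y) (hg : ∀ x y, g (x + y) = g x + g y)
    (h : ∀ l m, f (τ l m) = g (τ l m)) : ∀ x, f x = g x := by
  have := tensor_ext hTT (AddMonoidHom.mk' f hf) (AddMonoidHom.mk' g hg) h
  exact fun x => congrArg (fun (F : TT →+ Z) => F x) this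

lemma tau_gen : AddSubgroup.closure {x : TT | ∃ l m, x = τ l m} = ⊤ := by
  set C := AddSubgroup.closure {x : TT | ∃ l m, x = τ l m} with hC
  rw [eq_top_iff]
  intro x _
  have hmk : QuotientAddGroup.mk' C = (0 : TT →+ TT ⧸ C) := by
    refine tensor_ext hTT _ _ fun l m => ?_
    rw [AddMonoidHom.zero_apply, QuotientAddGroup.mk'_apply,
      QuotientAddGroup.eq_zero_iff]
    exact AddSubgroup.subset_closure ⟨l, m, rfl⟩
  have hx : QuotientAddGroup.mk' C x = 0 :=
    congrArg (fun (F : TT →+ TT ⧸ C) => F x) hmk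
  rwa [QuotientAddGroup.mk'_apply, QuotientAddGroup.eq_zero_iff] at hx

/-- The additive map out of the tensor product induced by a balanced map. -/
noncomputable def tLift {Z : Type u} [AddCommGroup Z] (g : L → M → Z)
    (hg : IsBalancedMap R (fun (l : L) r => op r • l) (fun r (m : M) => r • m) g) :
    TT →+ Z := (hTT.lift Z g hg).choose

lemma tLift_tau {Z : Type u} [AddCommGroup Z] (g : L → M → Z)
    (hg : IsBalancedMap R (fun (l : L) r => op r • l) (fun r (m : M) => r • m) g)
    (l : L) (m : M) : tLift hTT g hg (τ l m) = g l m :=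
  (hTT.lift Z g hg).choose_spec.1 l m

end Tensor
section Matrices

variable {R S T M N L : Type u} [Ring R] [Ring S] [Ring T]
  [AddCommGroup M] [Module R M] [Module Tᵐᵒᵖ M] [SMulCommClass R Tᵐᵒᵖ M]
  [AddCommGroup N] [AddCommGroup L]
  [Module R N] [Module Sᵐᵒᵖ N] [SMulCommClass R Sᵐᵒᵖ N]
  [Module S L] [Module Rᵐᵒᵖ L] [SMulCommClass S Rᵐᵒᵖ L]
  (mc : MoritaCtx R S N L)
  {TT : Type u} [AddCommGroup TT] {τ : L → M → TT}
  [Module S TT] [Module Tᵐᵒᵖ TT]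
  (hTT : IsBTensor R (fun (l : L) r => op r • l) (fun r (m : M) => r • m) TT τ)
  (hs : ∀ (s : S) (l : L) (m : M), s • τ l m = τ (s • l) m)
  (ht : ∀ (t : T) (l : L) (m : M), op t • τ l m = τ l (op t • m))
  (ν : N → TT → M)
  (hνl : ∀ n n' x, ν (n + n') x = ν n x + ν n' x)
  (hνr : ∀ n x x', ν n (x + x') = ν n x + ν n x')
  (hντ : ∀ n l m, ν n (τ l m) = mc.zeta n l • m)

-- simple zero lemmas
lemma zeta_zero_left (l : L) : mc.zeta 0 l = 0 := by
  have := mc.zeta_add_left 0 0 l; simpa using this.symm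
lemma zeta_zero_right (n : N) : mc.zeta n 0 = 0 := by
  have := mc.zeta_add_right n 0 0; simpa using this.symm
lemma theta_zero_left (n : N) : mc.theta 0 n = 0 := by
  have := mc.theta_add_left 0 0 n; simpa using this.symm
lemma theta_zero_right (l : L) : mc.theta l 0 = 0 := by
  have := mc.theta_add_right l 0 0; simpa using this.symm

section nuLemmas
include hνl hνr

lemma nu_zero_left (x : TT) : ν 0 x = 0 := by
  have := hνl 0 0 x; simpa using this.symm
lemma nu_zero_right (n : N) : ν n 0 = 0 := by
  have := hνr n 0 0; simpa using this.symm

end nuLemmas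

section ttLemmas
include hTT hs ht

lemma tt_smul_comm (s : S) (t : T) (x : TT) : s • op t • x = op t • s • x := by
  refine fun_ext_tau hTT (f := fun x => s • op t • x) (g := fun x => op t • s • x)
    (fun x y => by rw [smul_add, smul_add]) (fun x y => by rw [smul_add, smul_add])
    (fun l m => ?_) x
  rw [ht, hs, hs, ht]

end ttLemmas

section nuIdent
include hTT hνr hντ

lemma nu_rsmul (r : R) (n : N) (x : TT) : ν (r • n) x = r • ν n x := by
  refine fun_ext_tau hTT (f := fun x => ν (r • n) x) (g := fun x => r • ν n x)
    (fun x y => by rw [hνr]) (fun x y => by rw [hνr, smul_add]) (fun l m => ?_) x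
  rw [hντ, hντ, mc.zeta_left, mul_smul]

include ht in
lemma nu_topsmul (t : T) (n : N) (x : TT) : ν n (op t • x) = op t • ν n x := by
  refine fun_ext_tau hTT (f := fun x => ν n (op t • x)) (g := fun x => op t • ν n x)
    (fun x y => by rw [smul_add, hνr]) (fun x y => by rw [hνr, smul_add]) (fun l m => ?_) x
  rw [ht, hντ, hντ, smul_comm]

include hs in
lemma nu_sbal (s : S) (n : N) (x : TT) : ν (op s • n) x = ν n (s • x) := by
  refine fun_ext_tau hTT (f := fun x => ν (op s • n) x) (g := fun x => ν n (s • x))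
    (fun x y => by rw [hνr]) (fun x y => by rw [smul_add, hνr]) (fun l m => ?_) x
  rw [hντ, hs, hντ, mc.zeta_balanced]

include hs in
lemma theta_smul_nu (l : L) (n : N) (x : TT) : mc.theta l n • x = τ l (ν n x) := by
  refine fun_ext_tau hTT (f := fun x => mc.theta l n • x) (g := fun x => τ l (ν n x))
    (fun x y => by rw [smul_add])
    (fun x y => by rw [hνr, tau_add_right hTT]) (fun l' m' => ?_) x
  rw [hs, mc.assoc_right, tau_bal hTT, hντ]

end nuIdent

-- multiplication forms and actions
def mulformR : (R × M × T) → (R × M × T) → (R × M × T) := fun v w =>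
  (v.1 * w.1, v.1 • w.2.1 + op w.2.2 • v.2.1, v.2.2 * w.2.2)

def mulformS : (S × TT × T) → (S × TT × T) → (S × TT × T) := fun v w =>
  (v.1 * w.1, v.1 • w.2.1 + op w.2.2 • v.2.1, v.2.2 * w.2.2)

def actP : (R × M × T) → (N × M × T) → (N × M × T) := fun v p =>
  (v.1 • p.1, v.1 • p.2.1 + op p.2.2 • v.2.1, v.2.2 * p.2.2)

def actP' : (S × TT × T) → (N × M × T) → (N × M × T) := fun w p =>
  (op w.1 • p.1, ν p.1 w.2.1 + op w.2.2 • p.2.1, p.2.2 * w.2.2)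

def actQ : (S × TT × T) → (L × TT × T) → (L × TT × T) := fun w q =>
  (w.1 • q.1, w.1 • q.2.1 + op q.2.2 • w.2.1, w.2.2 * q.2.2)

variable (τ) in
def actQ' : (R × M × T) → (L × TT × T) → (L × TT × T) := fun v q =>
  (op v.1 • q.1, τ q.1 v.2.1 + op v.2.2 • q.2.1, q.2.2 * v.2.2)

def pairA : (N × M × T) → (L × TT × T) → (R × M × T) := fun p q =>
  (mc.zeta p.1 q.1, ν p.1 q.2.1 + op q.2.2 • p.2.1, p.2.2 * q.2.2)

variable (τ) in
def pairB : (L × TT × T) → (N × M × T) → (S × TT × T) := fun q p =>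
  (mc.theta q.1 p.1, τ q.1 p.2.1 + op p.2.2 • q.2.1, q.2.2 * p.2.2)

-- additivity of mulformS
lemma mulformS_add_left (v w u : S × TT × T) :
    mulformS (v + w) u = mulformS v u + mulformS w u := by
  simp only [mulformS, Prod.fst_add, Prod.snd_add, add_smul, add_mul, smul_add,
    Prod.mk_add_mk, Prod.mk.injEq, true_and, and_true]
  abel

lemma mulformS_add_right (v w u : S × TT × T) :
    mulformS v (w + u) = mulformS v w + mulformS v u := by
  simp only [mulformS, Prod.fst_add, Prod.snd_add, add_smul, mul_add, smul_add,
    MulOpposite.op_add, Prod.mk_add_mk, Prod.mk.injEq, true_and, and_true]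
  abel

lemma mulformS_zero_left (u : S × TT × T) : mulformS 0 u = 0 := by
  simp [mulformS]

lemma mulformS_zero_right (u : S × TT × T) : mulformS u 0 = 0 := by
  simp [mulformS]

lemma mulformS_neg_left (v u : S × TT × T) :
    mulformS (-v) u = -mulformS v u := by
  have h := mulformS_add_left (v := v) (w := -v) (u := u)
  rw [add_neg_cancel, mulformS_zero_left] at h
  exact (neg_eq_of_add_eq_zero_right h.symm).symm

lemma mulformS_neg_right (v u : S × TT × T) :
    mulformS v (-u) = -mulformS v u := by
  have h := mulformS_add_right (v := v) (w := u) (u := -u)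
  rw [add_neg_cancel, mulformS_zero_right] at h
  exact (neg_eq_of_add_eq_zero_right h.symm).symm
section Kprime
variable {Λ' : Type u} [Ring Λ'] (κ' : Λ' ≃+ S × TT × T)

include hTT in
lemma lam'_gen (b : Λ') :
    b ∈ AddSubgroup.closure {b : Λ' | ∃ s l m t, b = κ'.symm (s, τ l m, t)} := by
  set G := AddSubgroup.closure {b : Λ' | ∃ s l m t, b = κ'.symm (s, τ l m, t)} with hG
  have h0 : ∀ x : TT, κ'.symm (0, x, 0) ∈ G := by
    intro x
    have hx : x ∈ AddSubgroup.closure {x : TT | ∃ l m, x = τ l m} :=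
      (tau_gen hTT) ▸ AddSubgroup.mem_top x
    refine AddSubgroup.closure_induction ?_ ?_ ?_ ?_ hx
    · rintro _ ⟨l, m, rfl⟩; exact AddSubgroup.subset_closure ⟨0, l, m, 0, rfl⟩
    · have h : ((0 : S), (0 : TT), (0 : T)) = (0 : S × TT × T) := rfl
      rw [h, map_zero]; exact zero_mem G
    · intro x y _ _ hx hy
      have h : κ'.symm (0, x + y, 0) = κ'.symm (0, x, 0) + κ'.symm (0, y, 0) := by
        rw [← map_add]; congr 1; simp
      rw [h]; exact add_mem hx hy
    · intro x _ hx
      have h : κ'.symm (0, -x, 0) = -κ'.symm (0, x, 0) := by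
        rw [← map_neg]; congr 1; simp
      rw [h]; exact neg_mem hx
  have hb : b = κ'.symm ((κ' b).1, 0, (κ' b).2.2) + κ'.symm (0, (κ' b).2.1, 0) := by
    rw [← map_add]
    have h : (((κ' b).1, (0 : TT), (κ' b).2.2) + ((0 : S), (κ' b).2.1, (0 : T)))
        = κ' b := by simp
    rw [h, κ'.symm_apply_apply]
  rw [hb]
  refine add_mem ?_ (h0 _)
  refine AddSubgroup.subset_closure ⟨(κ' b).1, 0, 0, (κ' b).2.2, ?_⟩
  rw [tau_zero_left hTT]

include hTT hs ht in
lemma kprime_mul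
    (hκ'g : ∀ (s s' : S) (l l' : L) (m m' : M) (t t' : T),
      κ' (κ'.symm (s, τ l m, t) * κ'.symm (s', τ l' m', t'))
        = (s * s', τ (s • l') m' + τ l (op t' • m), t * t')) :
    ∀ b b' : Λ', κ' (b * b') = mulformS (κ' b) (κ' b') := by
  have step1 : ∀ (s : S) (l : L) (m : M) (t : T) (b' : Λ'),
      κ' (κ'.symm (s, τ l m, t) * b') = mulformS (s, τ l m, t) (κ' b') := by
    intro s l m t b'
    refine AddSubgroup.closure_induction ?_ ?_ ?_ ?_ (lam'_gen hTT κ' b')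
    · rintro _ ⟨s', l', m', t', rfl⟩
      rw [hκ'g, κ'.apply_symm_apply]
      simp only [mulformS]
      rw [hs, ht]
    · rw [mul_zero, map_zero, mulformS_zero_right]
    · intro x y _ _ hx hy
      rw [mul_add, map_add, hx, hy, map_add, mulformS_add_right]
    · intro x _ hx
      rw [mul_neg, map_neg, hx, map_neg, mulformS_neg_right]
  intro b b'
  refine AddSubgroup.closure_induction ?_ ?_ ?_ ?_ (lam'_gen hTT κ' b)
  · rintro _ ⟨s, l, m, t, rfl⟩
    rw [step1, κ'.apply_symm_apply]
  · rw [zero_mul, map_zero, mulformS_zero_left]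
  · intro x y _ _ hx hy; rw [add_mul, map_add, hx, hy, map_add, mulformS_add_left]
  · intro x _ hx; rw [neg_mul, map_neg, hx, map_neg, mulformS_neg_left]

end Kprime
-- raw lemmas about the actions
section ActLemmas

lemma actP_add_left (v w : R × M × T) (p : N × M × T) :
    actP (v + w) p = actP v p + actP w p := by
  obtain ⟨r, m0, t0⟩ := v; obtain ⟨r', m0', t0'⟩ := w; obtain ⟨n, m, t⟩ := p
  simp only [actP, Prod.mk_add_mk, add_smul, add_mul, smul_add, Prod.mk.injEq,
    true_and, and_true]
  abel

lemma actP_add_right (v : R × M × T) (p p' : N × M × T) :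
    actP v (p + p') = actP v p + actP v p' := by
  obtain ⟨r, m0, t0⟩ := v; obtain ⟨n, m, t⟩ := p; obtain ⟨n', m', t'⟩ := p'
  simp only [actP, Prod.mk_add_mk, smul_add, MulOpposite.op_add, add_smul, mul_add,
    Prod.mk.injEq, true_and, and_true]
  abel

lemma actP_zero_left (p : N × M × T) : actP (0 : R × M × T) p = 0 := by
  obtain ⟨n, m, t⟩ := p
  simp [actP]

lemma actP_zero_right (v : R × M × T) : actP v (0 : N × M × T) = 0 := by
  simp [actP]

lemma actP_one (p : N × M × T) : actP ((1 : R), (0 : M), (1 : T)) p = p := by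
  obtain ⟨n, m, t⟩ := p
  simp [actP]

lemma actP_mul (v w : R × M × T) (p : N × M × T) :
    actP (mulformR v w) p = actP v (actP w p) := by
  obtain ⟨r, m0, t0⟩ := v; obtain ⟨r', m0', t0'⟩ := w; obtain ⟨n, m, t⟩ := p
  simp only [mulformR, actP, mul_smul, smul_add, op_mul, mul_assoc, Prod.mk.injEq,
    true_and, and_true]
  rw [← smul_comm r (MulOpposite.op t) m0']
  abel

end ActLemmas
section ActLemmas2

lemma actQ_add_left (v w : S × TT × T) (q : L × TT × T) :
    actQ (v + w) q = actQ v q + actQ w q := by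
  obtain ⟨s, x, t1⟩ := v; obtain ⟨s', x', t1'⟩ := w; obtain ⟨l, y, t⟩ := q
  simp only [actQ, Prod.mk_add_mk, add_smul, add_mul, smul_add, Prod.mk.injEq,
    true_and, and_true]
  abel

lemma actQ_add_right (v : S × TT × T) (q q' : L × TT × T) :
    actQ v (q + q') = actQ v q + actQ v q' := by
  obtain ⟨s, x, t1⟩ := v; obtain ⟨l, y, t⟩ := q; obtain ⟨l', y', t'⟩ := q'
  simp only [actQ, Prod.mk_add_mk, smul_add, MulOpposite.op_add, add_smul, mul_add,
    Prod.mk.injEq, true_and, and_true]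
  abel

lemma actQ_zero_left (q : L × TT × T) : actQ (0 : S × TT × T) q = 0 := by
  obtain ⟨l, y, t⟩ := q; simp [actQ]

lemma actQ_zero_right (v : S × TT × T) : actQ v (0 : L × TT × T) = 0 := by
  simp [actQ]

lemma actQ_one (q : L × TT × T) : actQ ((1 : S), (0 : TT), (1 : T)) q = q := by
  obtain ⟨l, y, t⟩ := q; simp [actQ]

include hTT hs ht in
lemma actQ_mul (v w : S × TT × T) (q : L × TT × T) :
    actQ (mulformS v w) q = actQ v (actQ w q) := by
  obtain ⟨s, x, t1⟩ := v; obtain ⟨s', x', t1'⟩ := w; obtain ⟨l, y, t⟩ := q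
  simp only [mulformS, actQ, mul_smul, smul_add, op_mul, mul_assoc, Prod.mk.injEq,
    true_and, and_true]
  rw [tt_smul_comm hTT hs ht s t x']
  abel

include hTT in
lemma actQ'_add_left (v w : R × M × T) (q : L × TT × T) :
    actQ' τ (v + w) q = actQ' τ v q + actQ' τ w q := by
  obtain ⟨r, m0, t0⟩ := v; obtain ⟨r', m0', t0'⟩ := w; obtain ⟨l, y, t⟩ := q
  simp only [actQ', Prod.mk_add_mk, MulOpposite.op_add, add_smul, mul_add,
    tau_add_right hTT, Prod.mk.injEq, true_and, and_true]
  abel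

include hTT in
lemma actQ'_add_right (v : R × M × T) (q q' : L × TT × T) :
    actQ' τ v (q + q') = actQ' τ v q + actQ' τ v q' := by
  obtain ⟨r, m0, t0⟩ := v; obtain ⟨l, y, t⟩ := q; obtain ⟨l', y', t'⟩ := q'
  simp only [actQ', Prod.mk_add_mk, smul_add, add_smul, add_mul,
    tau_add_left hTT, Prod.mk.injEq, true_and, and_true]
  abel

include hTT in
lemma actQ'_zero_left (q : L × TT × T) : actQ' τ (0 : R × M × T) q = 0 := by
  obtain ⟨l, y, t⟩ := q; simp [actQ', tau_zero_right hTT]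

include hTT in
lemma actQ'_zero_right (v : R × M × T) : actQ' τ v (0 : L × TT × T) = 0 := by
  simp [actQ', tau_zero_left hTT]

include hTT in
lemma actQ'_one (q : L × TT × T) : actQ' τ ((1 : R), (0 : M), (1 : T)) q = q := by
  obtain ⟨l, y, t⟩ := q; simp [actQ', tau_zero_right hTT]

include hTT ht in
lemma actQ'_mul (v w : R × M × T) (q : L × TT × T) :
    actQ' τ (mulformR w v) q = actQ' τ v (actQ' τ w q) := by
  obtain ⟨r, m0, t0⟩ := v; obtain ⟨r', m0', t0'⟩ := w; obtain ⟨l, y, t⟩ := q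
  simp only [mulformR, actQ', mul_smul, op_mul, mul_assoc, smul_add,
    tau_add_right hTT, Prod.mk.injEq, true_and, and_true]
  rw [ht, tau_bal hTT]
  abel

include hTT hνl hνr in
lemma actP'_add_left (v w : S × TT × T) (p : N × M × T) :
    actP' ν (v + w) p = actP' ν v p + actP' ν w p := by
  obtain ⟨s, x, t1⟩ := v; obtain ⟨s', x', t1'⟩ := w; obtain ⟨n, m, t⟩ := p
  simp only [actP', Prod.mk_add_mk, MulOpposite.op_add, add_smul, mul_add, hνr,
    Prod.mk.injEq, true_and, and_true]
  abel

include hTT hνl hνr in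
lemma actP'_add_right (v : S × TT × T) (p p' : N × M × T) :
    actP' ν v (p + p') = actP' ν v p + actP' ν v p' := by
  obtain ⟨s, x, t1⟩ := v; obtain ⟨n, m, t⟩ := p; obtain ⟨n', m', t'⟩ := p'
  simp only [actP', Prod.mk_add_mk, smul_add, add_smul, add_mul, hνl,
    Prod.mk.injEq, true_and, and_true]
  abel

include hνl hνr in
lemma actP'_zero_left (p : N × M × T) : actP' ν (0 : S × TT × T) p = 0 := by
  obtain ⟨n, m, t⟩ := p; simp [actP', nu_zero_right ν hνl hνr]

include hνl hνr in
lemma actP'_zero_right (v : S × TT × T) : actP' ν v (0 : N × M × T) = 0 := by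
  simp [actP', nu_zero_left ν hνl hνr]

include hνl hνr in
lemma actP'_one (p : N × M × T) : actP' ν ((1 : S), (0 : TT), (1 : T)) p = p := by
  obtain ⟨n, m, t⟩ := p; simp [actP', nu_zero_right ν hνl hνr]

include hTT hs ht hνl hνr hντ in
lemma actP'_mul (v w : S × TT × T) (p : N × M × T) :
    actP' ν (mulformS w v) p = actP' ν v (actP' ν w p) := by
  obtain ⟨s, x, t1⟩ := v; obtain ⟨s', x', t1'⟩ := w; obtain ⟨n, m, t⟩ := p
  simp only [mulformS, actP', mul_smul, op_mul, mul_assoc, smul_add, hνr,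
    Prod.mk.injEq, true_and, and_true]
  rw [nu_sbal mc hTT hs ν hνr hντ, nu_topsmul mc hTT ht ν hνr hντ]
  abel

end ActLemmas2
section CommPair

include hTT hνr hντ in
lemma actP_actP'_comm (v : R × M × T) (w : S × TT × T) (p : N × M × T) :
    actP v (actP' ν w p) = actP' ν w (actP v p) := by
  obtain ⟨r, m0, t0⟩ := v; obtain ⟨s, x, t1⟩ := w; obtain ⟨n, m, t⟩ := p
  simp only [actP, actP', smul_add, op_mul, mul_smul, mul_assoc, Prod.mk.injEq]
  refine ⟨smul_comm r (op s) n, ?_, trivial⟩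
  rw [nu_rsmul mc hTT ν hνr hντ, ← smul_comm r (MulOpposite.op t1) m]
  abel

include hTT hs ht in
lemma actQ_actQ'_comm (w : S × TT × T) (v : R × M × T) (q : L × TT × T) :
    actQ w (actQ' τ v q) = actQ' τ v (actQ w q) := by
  obtain ⟨s, x, t1⟩ := w; obtain ⟨r, m0, t0⟩ := v; obtain ⟨l, y, t⟩ := q
  simp only [actQ, actQ', smul_add, op_mul, mul_smul, mul_assoc, Prod.mk.injEq]
  refine ⟨smul_comm s (op r) l, ?_, trivial⟩
  rw [hs, tt_smul_comm hTT hs ht s t0 y]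
  abel

-- pairing lemmas
include hνl hνr in
lemma pairA_add_left (p p' : N × M × T) (q : L × TT × T) :
    pairA mc ν (p + p') q = pairA mc ν p q + pairA mc ν p' q := by
  obtain ⟨n, m, t⟩ := p; obtain ⟨n', m', t'⟩ := p'; obtain ⟨l, y, t2⟩ := q
  simp only [pairA, Prod.mk_add_mk, mc.zeta_add_left, hνl, smul_add, add_mul,
    Prod.mk.injEq, true_and, and_true]
  abel

include hνl hνr in
lemma pairA_add_right (p : N × M × T) (q q' : L × TT × T) :
    pairA mc ν p (q + q') = pairA mc ν p q + pairA mc ν p q' := by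
  obtain ⟨n, m, t⟩ := p; obtain ⟨l, y, t2⟩ := q; obtain ⟨l', y', t2'⟩ := q'
  simp only [pairA, Prod.mk_add_mk, mc.zeta_add_right, hνr, MulOpposite.op_add,
    add_smul, mul_add, Prod.mk.injEq, true_and, and_true]
  abel

include hTT hνr hντ in
lemma pairA_actP (v : R × M × T) (p : N × M × T) (q : L × TT × T) :
    pairA mc ν (actP v p) q = mulformR v (pairA mc ν p q) := by
  obtain ⟨r, m0, t0⟩ := v; obtain ⟨n, m, t⟩ := p; obtain ⟨l, y, t2⟩ := q
  simp only [actP, pairA, mulformR, mc.zeta_left, smul_add, op_mul, mul_smul,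
    mul_assoc, Prod.mk.injEq, true_and, and_true]
  rw [nu_rsmul mc hTT ν hνr hντ, ← smul_comm r (MulOpposite.op t2) m]
  abel

include hTT ht hνr hντ in
lemma pairA_actQ' (v : R × M × T) (p : N × M × T) (q : L × TT × T) :
    pairA mc ν p (actQ' τ v q) = mulformR (pairA mc ν p q) v := by
  obtain ⟨r, m0, t0⟩ := v; obtain ⟨n, m, t⟩ := p; obtain ⟨l, y, t2⟩ := q
  simp only [actQ', pairA, mulformR, mc.zeta_right, smul_add, op_mul, mul_smul,
    mul_assoc, hνr, Prod.mk.injEq, true_and, and_true]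
  rw [hντ, nu_topsmul mc hTT ht ν hνr hντ]
  abel

include hTT hs ht hνr hντ in
lemma pairA_bal (w : S × TT × T) (p : N × M × T) (q : L × TT × T) :
    pairA mc ν (actP' ν w p) q = pairA mc ν p (actQ w q) := by
  obtain ⟨s, x, t1⟩ := w; obtain ⟨n, m, t⟩ := p; obtain ⟨l, y, t2⟩ := q
  simp only [actP', actQ, pairA, mc.zeta_balanced, smul_add, op_mul, mul_smul,
    mul_assoc, hνr, Prod.mk.injEq, true_and, and_true]
  rw [nu_sbal mc hTT hs ν hνr hντ, nu_topsmul mc hTT ht ν hνr hντ]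
  abel

include hTT in
lemma pairB_add_left (q q' : L × TT × T) (p : N × M × T) :
    pairB mc τ (q + q') p = pairB mc τ q p + pairB mc τ q' p := by
  obtain ⟨l, y, t2⟩ := q; obtain ⟨l', y', t2'⟩ := q'; obtain ⟨n, m, t⟩ := p
  simp only [pairB, Prod.mk_add_mk, mc.theta_add_left, tau_add_left hTT, add_smul,
    smul_add, MulOpposite.op_add, add_mul, Prod.mk.injEq, true_and, and_true]
  abel

include hTT in
lemma pairB_add_right (q : L × TT × T) (p p' : N × M × T) :
    pairB mc τ q (p + p') = pairB mc τ q p + pairB mc τ q p' := by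
  obtain ⟨l, y, t2⟩ := q; obtain ⟨n, m, t⟩ := p; obtain ⟨n', m', t'⟩ := p'
  simp only [pairB, Prod.mk_add_mk, mc.theta_add_right, tau_add_right hTT, smul_add,
    MulOpposite.op_add, add_smul, mul_add, Prod.mk.injEq, true_and, and_true]
  abel

include hTT hs ht in
lemma pairB_actQ (w : S × TT × T) (q : L × TT × T) (p : N × M × T) :
    pairB mc τ (actQ w q) p = mulformS w (pairB mc τ q p) := by
  obtain ⟨s, x, t1⟩ := w; obtain ⟨l, y, t2⟩ := q; obtain ⟨n, m, t⟩ := p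
  simp only [actQ, pairB, mulformS, mc.theta_left, smul_add, op_mul, mul_smul,
    mul_assoc, Prod.mk.injEq, true_and, and_true]
  rw [hs, tt_smul_comm hTT hs ht s t y]
  abel

include hTT hs ht hνr hντ in
lemma pairB_actP' (w : S × TT × T) (q : L × TT × T) (p : N × M × T) :
    pairB mc τ q (actP' ν w p) = mulformS (pairB mc τ q p) w := by
  obtain ⟨s, x, t1⟩ := w; obtain ⟨l, y, t2⟩ := q; obtain ⟨n, m, t⟩ := p
  simp only [actP', pairB, mulformS, mc.theta_right, tau_add_right hTT, op_mul,
    mul_smul, mul_assoc, Prod.mk.injEq, true_and, and_true]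
  rw [← theta_smul_nu mc hTT hs ν hνr hντ, ← ht, smul_add]
  abel

include hTT ht in
lemma pairB_bal (v : R × M × T) (q : L × TT × T) (p : N × M × T) :
    pairB mc τ (actQ' τ v q) p = pairB mc τ q (actP v p) := by
  obtain ⟨r, m0, t0⟩ := v; obtain ⟨l, y, t2⟩ := q; obtain ⟨n, m, t⟩ := p
  simp only [actQ', actP, pairB, mc.theta_balanced, tau_add_left hTT,
    tau_add_right hTT, op_mul, mul_smul, mul_assoc, smul_add, Prod.mk.injEq,
    true_and, and_true]
  rw [tau_bal hTT, ← ht]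
  abel

include hTT ht hνr hντ in
lemma assocA (p : N × M × T) (q : L × TT × T) (p' : N × M × T) :
    actP (pairA mc ν p q) p' = actP' ν (pairB mc τ q p') p := by
  obtain ⟨n, m, t⟩ := p; obtain ⟨l, y, t2⟩ := q; obtain ⟨n', m', t'⟩ := p'
  simp only [pairA, pairB, actP, actP', smul_add, op_mul, mul_smul, mul_assoc,
    hνr, Prod.mk.injEq]
  refine ⟨mc.assoc_left n l n', ?_, trivial⟩
  rw [hντ, nu_topsmul mc hTT ht ν hνr hντ]
  abel

include hTT hs ht hνr hντ in
lemma assocB (q : L × TT × T) (p : N × M × T) (q' : L × TT × T) :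
    actQ (pairB mc τ q p) q' = actQ' τ (pairA mc ν p q') q := by
  obtain ⟨l, y, t2⟩ := q; obtain ⟨n, m, t⟩ := p; obtain ⟨l', y', t2'⟩ := q'
  simp only [pairA, pairB, actQ, actQ', smul_add, op_mul, mul_smul, mul_assoc,
    tau_add_right hTT, Prod.mk.injEq]
  refine ⟨mc.assoc_right l n l', ?_, trivial⟩
  rw [theta_smul_nu mc hTT hs ν hνr hντ, ← ht]
  abel

end CommPair
section Mods
variable {Λ : Type u} [Ring Λ] (κ : Λ ≃+ R × M × T)
  {Λ' : Type u} [Ring Λ'] (κ' : Λ' ≃+ S × TT × T)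

def modP (hκ_one : κ 1 = (1, 0, 1))
    (hκ_mul : ∀ x y : Λ, κ (x * y) = mulformR (κ x) (κ y)) :
    Module Λ (N × M × T) where
  smul a p := actP (κ a) p
  one_smul p := by show actP (κ 1) p = p; rw [hκ_one]; exact actP_one p
  mul_smul a b p := by
    show actP (κ (a * b)) p = actP (κ a) (actP (κ b) p)
    rw [hκ_mul]; exact actP_mul _ _ _
  smul_zero a := by show actP (κ a) 0 = 0; exact actP_zero_right _
  smul_add a p p' := by
    show actP (κ a) (p + p') = actP (κ a) p + actP (κ a) p'
    exact actP_add_right _ _ _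
  add_smul a b p := by
    show actP (κ (a + b)) p = actP (κ a) p + actP (κ b) p
    rw [map_add]; exact actP_add_left _ _ _
  zero_smul p := by show actP (κ 0) p = 0; rw [map_zero]; exact actP_zero_left p

include mc hTT hs ht hνl hνr hντ in
def modP' (hκ'_one : κ' 1 = (1, 0, 1))
    (hκ'm : ∀ x y : Λ', κ' (x * y) = mulformS (κ' x) (κ' y)) :
    Module Λ'ᵐᵒᵖ (N × M × T) where
  smul c p := actP' ν (κ' c.unop) p
  one_smul p := by
    show actP' ν (κ' (unop 1)) p = p
    rw [unop_one, hκ'_one]; exact actP'_one ν hνl hνr p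
  mul_smul c d p := by
    show actP' ν (κ' ((c * d).unop)) p = actP' ν (κ' c.unop) (actP' ν (κ' d.unop) p)
    have h : (c * d).unop = d.unop * c.unop := rfl
    rw [h, hκ'm]
    exact actP'_mul mc hTT hs ht ν hνl hνr hντ _ _ _
  smul_zero c := by
    show actP' ν (κ' c.unop) 0 = 0
    exact actP'_zero_right ν hνl hνr _
  smul_add c p p' := by
    show actP' ν (κ' c.unop) (p + p') = actP' ν (κ' c.unop) p + actP' ν (κ' c.unop) p'
    exact actP'_add_right hTT ν hνl hνr _ _ _
  add_smul c d p := by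
    show actP' ν (κ' ((c + d).unop)) p = actP' ν (κ' c.unop) p + actP' ν (κ' d.unop) p
    have h : (c + d).unop = c.unop + d.unop := rfl
    rw [h, map_add]
    exact actP'_add_left hTT ν hνl hνr _ _ _
  zero_smul p := by
    show actP' ν (κ' ((0 : Λ'ᵐᵒᵖ).unop)) p = 0
    have h : (0 : Λ'ᵐᵒᵖ).unop = 0 := rfl
    rw [h, map_zero]
    exact actP'_zero_left ν hνl hνr p

include hTT hs ht in
def modQ (hκ'_one : κ' 1 = (1, 0, 1))
    (hκ'm : ∀ x y : Λ', κ' (x * y) = mulformS (κ' x) (κ' y)) :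
    Module Λ' (L × TT × T) where
  smul b q := actQ (κ' b) q
  one_smul q := by show actQ (κ' 1) q = q; rw [hκ'_one]; exact actQ_one q
  mul_smul a b q := by
    show actQ (κ' (a * b)) q = actQ (κ' a) (actQ (κ' b) q)
    rw [hκ'm]; exact actQ_mul hTT hs ht _ _ _
  smul_zero a := by show actQ (κ' a) 0 = 0; exact actQ_zero_right _
  smul_add a q q' := by
    show actQ (κ' a) (q + q') = actQ (κ' a) q + actQ (κ' a) q'
    exact actQ_add_right _ _ _
  add_smul a b q := by
    show actQ (κ' (a + b)) q = actQ (κ' a) q + actQ (κ' b) q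
    rw [map_add]; exact actQ_add_left _ _ _
  zero_smul q := by show actQ (κ' 0) q = 0; rw [map_zero]; exact actQ_zero_left q

include hTT ht in
def modQ' (hκ_one : κ 1 = (1, 0, 1))
    (hκ_mul : ∀ x y : Λ, κ (x * y) = mulformR (κ x) (κ y)) :
    Module Λᵐᵒᵖ (L × TT × T) where
  smul c q := actQ' τ (κ c.unop) q
  one_smul q := by
    show actQ' τ (κ (unop 1)) q = q
    rw [unop_one, hκ_one]; exact actQ'_one hTT q
  mul_smul c d q := by
    show actQ' τ (κ ((c * d).unop)) q = actQ' τ (κ c.unop) (actQ' τ (κ d.unop) q)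
    have h : (c * d).unop = d.unop * c.unop := rfl
    rw [h, hκ_mul]
    exact actQ'_mul hTT ht _ _ _
  smul_zero c := by
    show actQ' τ (κ c.unop) 0 = 0
    exact actQ'_zero_right hTT _
  smul_add c q q' := by
    show actQ' τ (κ c.unop) (q + q') = actQ' τ (κ c.unop) q + actQ' τ (κ c.unop) q'
    exact actQ'_add_right hTT _ _ _
  add_smul c d q := by
    show actQ' τ (κ ((c + d).unop)) q = actQ' τ (κ c.unop) q + actQ' τ (κ d.unop) q
    have h : (c + d).unop = c.unop + d.unop := rfl
    rw [h, map_add]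
    exact actQ'_add_left hTT _ _ _
  zero_smul q := by
    show actQ' τ (κ ((0 : Λᵐᵒᵖ).unop)) q = 0
    have h : (0 : Λᵐᵒᵖ).unop = 0 := rfl
    rw [h, map_zero]
    exact actQ'_zero_left hTT q

include hνl hνr in
lemma pairA_surj (hζ : AddSubgroup.closure {r : R | ∃ n l, r = mc.zeta n l} = ⊤) :
    AddSubgroup.closure {a : Λ | ∃ p q, a = κ.symm (pairA mc ν p q)} = ⊤ := by
  set G := AddSubgroup.closure {a : Λ | ∃ p q, a = κ.symm (pairA mc ν p q)} with hG
  rw [eq_top_iff]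
  rintro a -
  have key1 : κ.symm ((κ a).1, 0, 0) ∈ G := by
    have h1 : (κ a).1 ∈ AddSubgroup.closure {r : R | ∃ n l, r = mc.zeta n l} :=
      hζ ▸ AddSubgroup.mem_top _
    refine AddSubgroup.closure_induction ?_ ?_ ?_ ?_ h1
    · rintro _ ⟨n, l, rfl⟩
      refine AddSubgroup.subset_closure ⟨((n : N), (0 : M), (0 : T)),
        ((l : L), (0 : TT), (0 : T)), ?_⟩
      congr 1
      simp [pairA, nu_zero_right ν hνl hνr]
    · have h : ((0 : R), (0 : M), (0 : T)) = (0 : R × M × T) := rfl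
      rw [h, map_zero]; exact zero_mem G
    · intro r r' _ _ h1 h2
      have h : κ.symm ((r + r' : R), (0 : M), (0 : T))
          = κ.symm (r, 0, 0) + κ.symm (r', 0, 0) := by
        rw [← map_add]; congr 1; simp
      rw [h]; exact add_mem h1 h2
    · intro r _ h1
      have h : κ.symm ((-r : R), (0 : M), (0 : T)) = -κ.symm (r, 0, 0) := by
        rw [← map_neg]; congr 1; simp
      rw [h]; exact neg_mem h1
  have key2 : κ.symm (0, (κ a).2.1, 0) ∈ G := by
    refine AddSubgroup.subset_closure ⟨((0 : N), (κ a).2.1, (0 : T)),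
      ((0 : L), (0 : TT), (1 : T)), ?_⟩
    congr 1
    simp [pairA, nu_zero_left ν hνl hνr, zeta_zero_left]
  have key3 : κ.symm (0, 0, (κ a).2.2) ∈ G := by
    refine AddSubgroup.subset_closure ⟨((0 : N), (0 : M), (κ a).2.2),
      ((0 : L), (0 : TT), (1 : T)), ?_⟩
    congr 1
    simp [pairA, nu_zero_left ν hνl hνr, zeta_zero_left]
  have ha : a = κ.symm ((κ a).1, 0, 0) + κ.symm (0, (κ a).2.1, 0)
      + κ.symm (0, 0, (κ a).2.2) := by
    rw [← map_add, ← map_add]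
    have h : (((κ a).1, (0 : M), (0 : T)) + ((0 : R), (κ a).2.1, (0 : T)))
        + ((0 : R), (0 : M), (κ a).2.2) = κ a := by simp
    rw [h, κ.symm_apply_apply]
  rw [ha]
  exact add_mem (add_mem key1 key2) key3

include hTT in
lemma pairB_surj (hθ : AddSubgroup.closure {s : S | ∃ l n, s = mc.theta l n} = ⊤) :
    AddSubgroup.closure {b : Λ' | ∃ q p, b = κ'.symm (pairB mc τ q p)} = ⊤ := by
  set G := AddSubgroup.closure {b : Λ' | ∃ q p, b = κ'.symm (pairB mc τ q p)} with hG
  rw [eq_top_iff]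
  rintro b -
  have key1 : κ'.symm ((κ' b).1, 0, 0) ∈ G := by
    have h1 : (κ' b).1 ∈ AddSubgroup.closure {s : S | ∃ l n, s = mc.theta l n} :=
      hθ ▸ AddSubgroup.mem_top _
    refine AddSubgroup.closure_induction ?_ ?_ ?_ ?_ h1
    · rintro _ ⟨l, n, rfl⟩
      refine AddSubgroup.subset_closure ⟨((l : L), (0 : TT), (0 : T)),
        ((n : N), (0 : M), (0 : T)), ?_⟩
      congr 1
      simp [pairB, tau_zero_right hTT]
    · have h : ((0 : S), (0 : TT), (0 : T)) = (0 : S × TT × T) := rfl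
      rw [h, map_zero]; exact zero_mem G
    · intro s s' _ _ h1 h2
      have h : κ'.symm ((s + s' : S), (0 : TT), (0 : T))
          = κ'.symm (s, 0, 0) + κ'.symm (s', 0, 0) := by
        rw [← map_add]; congr 1; simp
      rw [h]; exact add_mem h1 h2
    · intro s _ h1
      have h : κ'.symm ((-s : S), (0 : TT), (0 : T)) = -κ'.symm (s, 0, 0) := by
        rw [← map_neg]; congr 1; simp
      rw [h]; exact neg_mem h1
  have key2 : κ'.symm (0, (κ' b).2.1, 0) ∈ G := by
    have h1 : (κ' b).2.1 ∈ AddSubgroup.closure {x : TT | ∃ l m, x = τ l m} :=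
      (tau_gen hTT) ▸ AddSubgroup.mem_top _
    refine AddSubgroup.closure_induction ?_ ?_ ?_ ?_ h1
    · rintro _ ⟨l, m, rfl⟩
      refine AddSubgroup.subset_closure ⟨((l : L), (0 : TT), (0 : T)),
        ((0 : N), (m : M), (0 : T)), ?_⟩
      congr 1
      simp [pairB, theta_zero_right]
    · have h : ((0 : S), (0 : TT), (0 : T)) = (0 : S × TT × T) := rfl
      rw [h, map_zero]; exact zero_mem G
    · intro x y _ _ h1 h2
      have h : κ'.symm ((0 : S), x + y, (0 : T))
          = κ'.symm (0, x, 0) + κ'.symm (0, y, 0) := by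
        rw [← map_add]; congr 1; simp
      rw [h]; exact add_mem h1 h2
    · intro x _ h1
      have h : κ'.symm ((0 : S), -x, (0 : T)) = -κ'.symm (0, x, 0) := by
        rw [← map_neg]; congr 1; simp
      rw [h]; exact neg_mem h1
  have key3 : κ'.symm (0, 0, (κ' b).2.2) ∈ G := by
    refine AddSubgroup.subset_closure ⟨((0 : L), (0 : TT), (κ' b).2.2),
      ((0 : N), (0 : M), (1 : T)), ?_⟩
    congr 1
    simp [pairB, tau_zero_left hTT, theta_zero_left]
  have hb : b = κ'.symm ((κ' b).1, 0, 0) + κ'.symm (0, (κ' b).2.1, 0)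
      + κ'.symm (0, 0, (κ' b).2.2) := by
    rw [← map_add, ← map_add]
    have h : (((κ' b).1, (0 : TT), (0 : T)) + ((0 : S), (κ' b).2.1, (0 : T)))
        + ((0 : S), (0 : TT), (κ' b).2.2) = κ' b := by simp
    rw [h, κ'.symm_apply_apply]
  rw [hb]
  exact add_mem (add_mem key1 key2) key3

end Mods
section Main
variable {Λ : Type u} [Ring Λ] (κ : Λ ≃+ R × M × T)
  {Λ' : Type u} [Ring Λ'] (κ' : Λ' ≃+ S × TT × T)

include mc hTT hs ht hνl hνr hντ in
theorem main_equiv (hκ_one : κ 1 = (1, 0, 1))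
    (hκ_mul : ∀ x y : Λ, κ (x * y) = mulformR (κ x) (κ y))
    (hκ'_one : κ' 1 = (1, 0, 1))
    (hκ'm : ∀ x y : Λ', κ' (x * y) = mulformS (κ' x) (κ' y))
    (hζ : AddSubgroup.closure {r : R | ∃ n l, r = mc.zeta n l} = ⊤)
    (hθ : AddSubgroup.closure {s : S | ∃ l n, s = mc.theta l n} = ⊤) :
    Nonempty (ModuleCat.{u} Λ ≌ ModuleCat.{u} Λ') := by
  letI instP : Module Λ (N × M × T) := modP κ hκ_one hκ_mul
  letI instP' : Module Λ'ᵐᵒᵖ (N × M × T) :=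
    modP' mc hTT hs ht ν hνl hνr hντ κ' hκ'_one hκ'm
  haveI : SMulCommClass Λ Λ'ᵐᵒᵖ (N × M × T) :=
    ⟨fun a c p => actP_actP'_comm mc hTT ν hνr hντ (κ a) (κ' c.unop) p⟩
  letI instQ : Module Λ' (L × TT × T) := modQ hTT hs ht κ' hκ'_one hκ'm
  letI instQ' : Module Λᵐᵒᵖ (L × TT × T) := modQ' hTT ht κ hκ_one hκ_mul
  haveI : SMulCommClass Λ' Λᵐᵒᵖ (L × TT × T) :=
    ⟨fun b c q => actQ_actQ'_comm hTT hs ht (κ' b) (κ c.unop) q⟩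
  refine morita_abstract (A := Λ) (B := Λ') (P := N × M × T) (Q := L × TT × T)
    (fun p q => κ.symm (pairA mc ν p q)) (fun q p => κ'.symm (pairB mc τ q p))
    ?_ ?_ ?_ ?_ ?_ ?_ ?_ ?_ ?_ ?_ ?_ ?_ ?_ ?_
  · intro p p' q
    rw [pairA_add_left mc ν hνl hνr, map_add]
  · intro p q q'
    rw [pairA_add_right mc ν hνl hνr, map_add]
  · intro a p q
    show κ.symm (pairA mc ν (actP (κ a) p) q) = a * κ.symm (pairA mc ν p q)
    apply κ.injective
    rw [hκ_mul, κ.apply_symm_apply, κ.apply_symm_apply,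
      pairA_actP mc hTT ν hνr hντ]
  · intro a p q
    show κ.symm (pairA mc ν p (actQ' τ (κ (op a).unop) q))
      = κ.symm (pairA mc ν p q) * a
    apply κ.injective
    rw [hκ_mul, κ.apply_symm_apply, κ.apply_symm_apply]
    have h : (op a).unop = a := rfl
    rw [h, pairA_actQ' mc hTT ht ν hνr hντ]
  · intro b p q
    show κ.symm (pairA mc ν (actP' ν (κ' (op b).unop) p) q)
      = κ.symm (pairA mc ν p (actQ (κ' b) q))
    have h : (op b).unop = b := rfl
    rw [h, pairA_bal mc hTT hs ht ν hνr hντ]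
  · intro q q' p
    rw [pairB_add_left mc hTT, map_add]
  · intro q p p'
    rw [pairB_add_right mc hTT, map_add]
  · intro b q p
    show κ'.symm (pairB mc τ (actQ (κ' b) q) p) = b * κ'.symm (pairB mc τ q p)
    apply κ'.injective
    rw [hκ'm, κ'.apply_symm_apply, κ'.apply_symm_apply,
      pairB_actQ mc hTT hs ht]
  · intro b q p
    show κ'.symm (pairB mc τ q (actP' ν (κ' (op b).unop) p))
      = κ'.symm (pairB mc τ q p) * b
    apply κ'.injective
    rw [hκ'm, κ'.apply_symm_apply, κ'.apply_symm_apply]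
    have h : (op b).unop = b := rfl
    rw [h, pairB_actP' mc hTT hs ht ν hνr hντ]
  · intro a q p
    show κ'.symm (pairB mc τ (actQ' τ (κ (op a).unop) q) p)
      = κ'.symm (pairB mc τ q (actP (κ a) p))
    have h : (op a).unop = a := rfl
    rw [h, pairB_bal mc hTT ht]
  · intro p q p'
    show actP (κ (κ.symm (pairA mc ν p q))) p'
      = actP' ν (κ' (op (κ'.symm (pairB mc τ q p'))).unop) p
    have h : (op (κ'.symm (pairB mc τ q p'))).unop = κ'.symm (pairB mc τ q p') := rfl
    rw [h, κ.apply_symm_apply, κ'.apply_symm_apply]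
    exact assocA mc hTT ht ν hνr hντ p q p'
  · intro q p q'
    show actQ (κ' (κ'.symm (pairB mc τ q p))) q'
      = actQ' τ (κ (op (κ.symm (pairA mc ν p q'))).unop) q
    have h : (op (κ.symm (pairA mc ν p q'))).unop = κ.symm (pairA mc ν p q') := rfl
    rw [h, κ'.apply_symm_apply, κ.apply_symm_apply]
    exact assocB mc hTT hs ht ν hνr hντ q p q'
  · exact pairA_surj mc ν hνl hνr κ hζ
  · exact pairB_surj mc hTT κ' hθ

end Main
end Matrices
section Construct
variable {R S T M N L : Type u} [Ring R] [Ring S] [Ring T]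
  [AddCommGroup M] [Module R M] [Module Tᵐᵒᵖ M] [SMulCommClass R Tᵐᵒᵖ M]
  [AddCommGroup N] [AddCommGroup L]
  [Module R N] [Module Sᵐᵒᵖ N] [SMulCommClass R Sᵐᵒᵖ N]
  [Module S L] [Module Rᵐᵒᵖ L] [SMulCommClass S Rᵐᵒᵖ L]
  {TT : Type u} [AddCommGroup TT] {τ : L → M → TT}
  (hTT : IsBTensor R (fun (l : L) r => op r • l) (fun r (m : M) => r • m) TT τ)

noncomputable def sAct (s : S) : TT →+ TT :=
  tLift hTT (fun l m => τ (s • l) m)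
    ⟨fun l l' m => by dsimp only; rw [smul_add, tau_add_left hTT],
     fun l m m' => by dsimp only; rw [tau_add_right hTT],
     fun r l m => by dsimp only; rw [smul_comm, tau_bal hTT]⟩

lemma sAct_tau (s : S) (l : L) (m : M) : sAct hTT s (τ l m) = τ (s • l) m :=
  tLift_tau hTT _ _ l m

noncomputable def tauT (t : T) : TT →+ TT :=
  tLift hTT (fun l m => τ l (op t • m))
    ⟨fun l l' m => by dsimp only; rw [tau_add_left hTT],
     fun l m m' => by dsimp only; rw [smul_add, tau_add_right hTT],
     fun r l m => by dsimp only; rw [tau_bal hTT, smul_comm]⟩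

lemma tauT_tau (t : T) (l : L) (m : M) : tauT hTT t (τ l m) = τ l (op t • m) :=
  tLift_tau hTT _ _ l m

noncomputable def nuDef (mc : MoritaCtx R S N L) (n : N) : TT →+ M :=
  tLift hTT (fun l m => mc.zeta n l • m)
    ⟨fun l l' m => by dsimp only; rw [mc.zeta_add_right, add_smul],
     fun l m m' => by dsimp only; rw [smul_add],
     fun r l m => by dsimp only; rw [mc.zeta_right, mul_smul]⟩

lemma nuDef_tau (mc : MoritaCtx R S N L) (n : N) (l : L) (m : M) :
    nuDef hTT mc n (τ l m) = mc.zeta n l • m :=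
  tLift_tau hTT _ _ l m

noncomputable def ttS : Module S TT where
  smul s x := sAct hTT s x
  one_smul x := by
    have h : sAct hTT (1 : S) = AddMonoidHom.id TT :=
      tensor_ext hTT _ _ (fun l m => by
        rw [sAct_tau, one_smul, AddMonoidHom.id_apply])
    exact congrArg (fun F : TT →+ TT => F x) h
  mul_smul s s' x := by
    have h : sAct hTT (s * s') = (sAct hTT s).comp (sAct hTT s') :=
      tensor_ext hTT _ _ (fun l m => by
        rw [sAct_tau, AddMonoidHom.comp_apply, sAct_tau, sAct_tau, mul_smul])
    exact congrArg (fun F : TT →+ TT => F x) h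
  smul_zero s := (sAct hTT s).map_zero
  smul_add s x y := (sAct hTT s).map_add x y
  add_smul s s' x := by
    have h : sAct hTT (s + s') = sAct hTT s + sAct hTT s' :=
      tensor_ext hTT _ _ (fun l m => by
        rw [sAct_tau, AddMonoidHom.add_apply, sAct_tau, sAct_tau, add_smul,
          tau_add_left hTT])
    exact congrArg (fun F : TT →+ TT => F x) h
  zero_smul x := by
    have h : sAct hTT (0 : S) = 0 :=
      tensor_ext hTT _ _ (fun l m => by
        rw [sAct_tau, zero_smul, tau_zero_left hTT, AddMonoidHom.zero_apply])
    exact congrArg (fun F : TT →+ TT => F x) h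

noncomputable def ttT : Module Tᵐᵒᵖ TT where
  smul c x := tauT hTT c.unop x
  one_smul x := by
    have h : tauT hTT ((1 : Tᵐᵒᵖ).unop) = AddMonoidHom.id TT :=
      tensor_ext hTT _ _ (fun l m => by
        rw [tauT_tau, AddMonoidHom.id_apply, MulOpposite.op_unop, one_smul])
    exact congrArg (fun F : TT →+ TT => F x) h
  mul_smul c d x := by
    have h : tauT hTT ((c * d).unop) = (tauT hTT c.unop).comp (tauT hTT d.unop) :=
      tensor_ext hTT _ _ (fun l m => by
        rw [tauT_tau, AddMonoidHom.comp_apply, tauT_tau, tauT_tau,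
          MulOpposite.op_unop, MulOpposite.op_unop, MulOpposite.op_unop, mul_smul])
    exact congrArg (fun F : TT →+ TT => F x) h
  smul_zero c := (tauT hTT c.unop).map_zero
  smul_add c x y := (tauT hTT c.unop).map_add x y
  add_smul c d x := by
    have h : tauT hTT ((c + d).unop) = tauT hTT c.unop + tauT hTT d.unop :=
      tensor_ext hTT _ _ (fun l m => by
        rw [tauT_tau, AddMonoidHom.add_apply, tauT_tau, tauT_tau,
          MulOpposite.op_unop, MulOpposite.op_unop, MulOpposite.op_unop,
          add_smul, tau_add_right hTT])
    exact congrArg (fun F : TT →+ TT => F x) h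
  zero_smul x := by
    have h : tauT hTT ((0 : Tᵐᵒᵖ).unop) = 0 :=
      tensor_ext hTT _ _ (fun l m => by
        rw [tauT_tau, MulOpposite.op_unop, zero_smul,
          tau_zero_right hTT, AddMonoidHom.zero_apply])
    exact congrArg (fun F : TT →+ TT => F x) h

end Construct
/-- let `R`, `S`, `T` be unital rings, `M` an `R`–`T`-bimodule and
`(R, S; N, L; ζ, θ)` a Morita context with `ζ` and `θ` surjective.  Let `Λ` be the
upper-triangular matrix ring on `R × M × T` and `Λ'` the upper-triangular matrix
ring on `S × (L ⊗[R] M) × T` (with `s·(l ⊗ m)·t = (s·l) ⊗ (m·t)`).  Then `Λ` and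
`Λ'` are Morita equivalent, i.e. their categories of left modules are
equivalent. -/
theorem stmt14 (R S T : Type u) [Ring R] [Ring S] [Ring T]
    (M : Type u) [AddCommGroup M]
    [Module R M] [Module Tᵐᵒᵖ M] [SMulCommClass R Tᵐᵒᵖ M]
    (N L : Type u) [AddCommGroup N] [AddCommGroup L]
    [Module R N] [Module Sᵐᵒᵖ N] [SMulCommClass R Sᵐᵒᵖ N]
    [Module S L] [Module Rᵐᵒᵖ L] [SMulCommClass S Rᵐᵒᵖ L]
    (mc : MoritaCtx R S N L) (hζ : TensorSurj mc.zeta) (hθ : TensorSurj mc.theta)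
    -- the upper-triangular matrix ring Λ on R × M × T
    (Λ : Type u) [Ring Λ] (κ : Λ ≃+ R × M × T)
    (hκ_one : κ 1 = (1, 0, 1))
    (hκ_mul : ∀ x y : Λ, κ (x * y) =
      ((κ x).1 * (κ y).1,
       (κ x).1 • (κ y).2.1 + op (κ y).2.2 • (κ x).2.1,
       (κ x).2.2 * (κ y).2.2))
    -- the tensor product L ⊗[R] M
    (TT : Type u) [AddCommGroup TT] (τ : L → M → TT)
    (hTT : IsBTensor R (fun (l : L) r => op r • l) (fun r (m : M) => r • m) TT τ)
    -- the upper-triangular matrix ring Λ' on S × (L ⊗[R] M) × T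
    (Λ' : Type u) [Ring Λ'] (κ' : Λ' ≃+ S × TT × T)
    (hκ'_one : κ' 1 = (1, 0, 1))
    (hκ'_mul : ∀ (s s' : S) (l l' : L) (m m' : M) (t t' : T),
      κ' (κ'.symm (s, τ l m, t) * κ'.symm (s', τ l' m', t'))
        = (s * s', τ (s • l') m' + τ l (op t' • m), t * t')) :
    Nonempty (ModuleCat.{u} Λ ≌ ModuleCat.{u} Λ') := by
  letI : Module S TT := ttS hTT
  letI : Module Tᵐᵒᵖ TT := ttT hTT
  have hs : ∀ (s : S) (l : L) (m : M), s • τ l m = τ (s • l) m :=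
    fun s l m => sAct_tau hTT s l m
  have ht : ∀ (t : T) (l : L) (m : M), op t • τ l m = τ l (op t • m) :=
    fun t l m => tauT_tau hTT t l m
  have hνl : ∀ (n n' : N) (x : TT),
      nuDef hTT mc (n + n') x = nuDef hTT mc n x + nuDef hTT mc n' x := by
    intro n n' x
    have h : nuDef hTT mc (n + n') = nuDef hTT mc n + nuDef hTT mc n' :=
      tensor_ext hTT _ _ (fun l m => by
        rw [nuDef_tau, AddMonoidHom.add_apply, nuDef_tau, nuDef_tau,
          mc.zeta_add_left, add_smul])
    exact congrArg (fun F : TT →+ M => F x) h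
  have hνr : ∀ (n : N) (x x' : TT),
      nuDef hTT mc n (x + x') = nuDef hTT mc n x + nuDef hTT mc n x' :=
    fun n x x' => (nuDef hTT mc n).map_add x x'
  have hντ : ∀ (n : N) (l : L) (m : M),
      nuDef hTT mc n (τ l m) = mc.zeta n l • m := nuDef_tau hTT mc
  have hκ'm : ∀ b b' : Λ', κ' (b * b') = mulformS (κ' b) (κ' b') :=
    kprime_mul hTT hs ht κ' (fun s s' l l' m m' t t' => hκ'_mul s s' l l' m m' t t')
  exact main_equiv mc hTT hs ht (fun n x => nuDef hTT mc n x) hνl hνr hντ κ κ'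
    hκ_one hκ_mul hκ'_one hκ'm hζ hθ
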